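/- arXiv:2212.02543 — 2 statements merged into one kernel-verified Lean document; each statement's English description precedes it below -/
import Mathlib

section
/- Let {F_m} be a POVM on a finite-dimensional Hilbert space with each F_m of rank at most 1, and suppose the superoperator M = ∑_m Tr[F_m] |F̃_m⟩⟩⟨⟨F̃_m| (where F̃_m = F_m/Tr[F_m] for Tr[F_m] > 0) is invertible. Then for any Hermitian observable O and any density matrix ρ, the estimator w_m = Tr[M⁻¹[O] F̃_m] is unbiased: ∑_m Tr[F_m ρ] w_m = Tr[O ρ]. -/
/-!
Since `F̃_m` is Hermitian and `Tr[F_m] F̃_m = F_m` (a positive semidefinite `F_m` with zero trace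
vanishes), each term of the channel is `Tr[F_m] ⟨⟨F̃_m|X⟩⟩ F̃_m = Tr[X F̃_m] F_m`. Hence
`∑_m Tr[F_m ρ] Tr[X F̃_m] = Tr[M[X] ρ]` for every `X`, and `X = M⁻¹[O]` gives the claim.
-/

open Matrix
open scoped ComplexOrder

namespace Matrix

variable {ι 𝕜 : Type*} [Fintype ι]

lemma IsHermitian.star_trace {R : Type*} [AddCommMonoid R] [StarAddMonoid R] {A : Matrix ι ι R}
    (hA : A.IsHermitian) : star A.trace = A.trace := by
  rw [← trace_conjTranspose, hA.eq]

lemma PosSemidef.trace_smul_trace_conjTranspose_mul_smul [RCLike 𝕜] {A B : Matrix ι ι 𝕜}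
    (hA : A.PosSemidef) (hB : A.trace ≠ 0 → B = A.trace⁻¹ • A) (X : Matrix ι ι 𝕜) :
    A.trace • (Bᴴ * X).trace • B = (X * B).trace • A := by
  by_cases h0 : A.trace = 0
  · simp [hA.trace_eq_zero_iff.mp h0]
  · rw [hB h0, conjTranspose_smul, hA.isHermitian.eq, star_inv₀, hA.isHermitian.star_trace,
      trace_mul_comm X]
    simp only [Matrix.smul_mul, trace_smul, smul_eq_mul, smul_smul]
    field_simp

end Matrix

theorem shadow_estimator_unbiased_general
    (d n : ℕ)
    (F : Fin n → Matrix (Fin d) (Fin d) ℂ)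
    (hFpsd : ∀ m, (F m).PosSemidef)
    -- normalized POVM elements `F̃_m = F_m / Tr[F_m]` (for `Tr[F_m] > 0`)
    (Ft : Fin n → Matrix (Fin d) (Fin d) ℂ)
    (hFt : ∀ m, (F m).trace ≠ 0 → Ft m = ((F m).trace)⁻¹ • F m)
    -- the superoperator `M = ∑_m Tr[F_m] |F̃_m⟩⟩⟨⟨F̃_m|`
    (M Minv : Matrix (Fin d) (Fin d) ℂ → Matrix (Fin d) (Fin d) ℂ)
    (hM : ∀ A, M A = ∑ m, (F m).trace • ((Ft m)ᴴ * A).trace • Ft m)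
    -- `M` is invertible with (two-sided) inverse `Minv`
    (hInv₂ : ∀ A, M (Minv A) = A)
    -- observable and state
    (O : Matrix (Fin d) (Fin d) ℂ)
    (ρ : Matrix (Fin d) (Fin d) ℂ) :
    ∑ m, (F m * ρ).trace * (Minv O * Ft m).trace = (O * ρ).trace := by
  have hM' : ∀ X, M X = ∑ m, (X * Ft m).trace • F m := fun X => by
    rw [hM]
    exact Finset.sum_congr rfl fun m _ =>
      (hFpsd m).trace_smul_trace_conjTranspose_mul_smul (hFt m) X
  calc ∑ m, (F m * ρ).trace * (Minv O * Ft m).trace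
      = ((∑ m, (Minv O * Ft m).trace • F m) * ρ).trace := by
        simp only [Finset.sum_mul, trace_sum, smul_mul, trace_smul, smul_eq_mul, mul_comm]
    _ = (O * ρ).trace := by rw [← hM', hInv₂]

/-- for a rank-one POVM `{F_m}` with invertible measurement channel
`M = ∑_m Tr[F_m] |F̃_m⟩⟩⟨⟨F̃_m|`, the linear estimator with weights
`w_m = Tr[M⁻¹[O] F̃_m]` is unbiased: `∑_m Tr[F_m ρ] w_m = Tr[O ρ]`. -/
theorem shadow_estimator_unbiased
    (d n : ℕ)
    (F : Fin n → Matrix (Fin d) (Fin d) ℂ)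
    (hFpsd : ∀ m, (F m).PosSemidef)
    (hFrank : ∀ m, (F m).rank ≤ 1)
    (hFsum : ∑ m, F m = 1)
    -- normalized POVM elements `F̃_m = F_m / Tr[F_m]` (for `Tr[F_m] > 0`)
    (Ft : Fin n → Matrix (Fin d) (Fin d) ℂ)
    (hFt : ∀ m, (F m).trace ≠ 0 → Ft m = ((F m).trace)⁻¹ • F m)
    -- the superoperator `M = ∑_m Tr[F_m] |F̃_m⟩⟩⟨⟨F̃_m|`
    (M Minv : Matrix (Fin d) (Fin d) ℂ → Matrix (Fin d) (Fin d) ℂ)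
    (hM : ∀ A, M A = ∑ m, (F m).trace • ((Ft m)ᴴ * A).trace • Ft m)
    -- `M` is invertible with (two-sided) inverse `Minv`
    (hInv₁ : ∀ A, Minv (M A) = A) (hInv₂ : ∀ A, M (Minv A) = A)
    -- observable and state
    (O : Matrix (Fin d) (Fin d) ℂ) (hO : O.IsHermitian)
    (ρ : Matrix (Fin d) (Fin d) ℂ) (hρ : ρ.PosSemidef) (hρtr : ρ.trace = 1) :
    ∑ m, (F m * ρ).trace * (Minv O * Ft m).trace = (O * ρ).trace :=
  shadow_estimator_unbiased_general d n F hFpsd Ft hFt M Minv hM hInv₂ O ρ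
end

section
/- Define R = (d+1)²[π_{(12)} + π_{(123)} + π_{(132)}] − (d+1)[π_e + π_{(13)} + π_{(23)}] on H^{⊗3} with dim H = d. Then the singular values of R are 0, 3d(d+1), (d+1)(d+2), and 2(d+1)(d+2), with multiplicities 2·C(d+1,3), C(d+2,3), C(d,3), and 2·C(d+1,3) respectively, where C(n,k) is the binomial coefficient. -/
/-!
With `P = π_(12)` and `X = π_(13) + π_(23)` one has `P² = 1`, `PX = XP = π_(123) + π_(132)`
and `X² = 2 + PX`, so `R = (d+1)²(P + PX) - (d+1)(1 + X)` lies in the commutative algebra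
generated by `P` and `X`. That algebra is spanned by the four orthogonal idempotents
`(1+P)(2-X)/6, (1+P)(1+X)/6, (1-P)(1-X)/6, (1-P)(2+X)/6`, which sum to `1` and on which `R` acts
by `0, 3d(d+1), (d+1)(d+2), -2(d+1)(d+2)`. For a Hermitian matrix `A = ∑ μᵢ Eᵢ` with complete
orthogonal idempotents `Eᵢ` one has `q(A) = ∑ q(μᵢ) Eᵢ` for every polynomial `q`; taking for `q`
a Lagrange basis polynomial shows that the multiplicity of an eigenvalue `x` is
`∑_{μᵢ = x} tr Eᵢ`. The traces come from `tr π_σ = d ^ (number of cycles of σ)`.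
-/

open Matrix

/-- The permutation operator `π_σ` on `H^{⊗3}`, with matrix elements `δ_{i, j∘σ}`. -/
def permOp3 (d : ℕ) (σ : Equiv.Perm (Fin 3)) :
    Matrix (Fin 3 → Fin d) (Fin 3 → Fin d) ℂ :=
  Matrix.of fun i j => if i = j ∘ σ then 1 else 0

open Polynomial Finset

lemma OrthogonalIdempotents.sum_smul_mul_sum_smul {R B ι : Type*} [CommSemiring R]
    [Semiring B] [Algebra R B] [Fintype ι] [DecidableEq ι] {e : ι → B}
    (he : OrthogonalIdempotents e) (a b : ι → R) :
    (∑ i, a i • e i) * (∑ i, b i • e i) = ∑ i, (a i * b i) • e i := by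
  simp_rw [Finset.sum_mul, Finset.mul_sum, smul_mul_smul_comm, he.mul_eq, smul_ite, smul_zero,
    Finset.sum_ite_eq]
  simp

lemma CompleteOrthogonalIdempotents.aeval_sum_smul {R B ι : Type*} [CommSemiring R]
    [Semiring B] [Algebra R B] [Fintype ι] [DecidableEq ι] {e : ι → B}
    (he : CompleteOrthogonalIdempotents e) (μ : ι → R) (q : R[X]) :
    aeval (∑ i, μ i • e i) q = ∑ i, q.eval (μ i) • e i := by
  have hpow : ∀ k : ℕ, (∑ i, μ i • e i) ^ k = ∑ i, μ i ^ k • e i := by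
    intro k
    induction k with
    | zero => simp [he.complete]
    | succ k ih => simp_rw [pow_succ, ih, he.1.sum_smul_mul_sum_smul]
  simp_rw [aeval_eq_sum_range, hpow, Finset.smul_sum, smul_smul, eval_eq_sum_range,
    Finset.sum_smul]
  rw [Finset.sum_comm]

namespace Matrix.IsHermitian
variable {𝕜 n : Type*} [RCLike 𝕜] [Fintype n] [DecidableEq n] {A : Matrix n n 𝕜}

lemma trace_cfc (hA : A.IsHermitian) (f : ℝ → ℝ) :
    (cfc f A).trace = ∑ i, (f (hA.eigenvalues i) : 𝕜) := by
  rw [hA.cfc_eq, IsHermitian.cfc, Unitary.conjStarAlgAut_apply, trace_mul_cycle,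
    Unitary.coe_star_mul_self, one_mul, trace_diagonal]
  rfl

lemma trace_aeval (hA : A.IsHermitian) (q : ℝ[X]) :
    (aeval A q).trace = ∑ i, ((q.eval (hA.eigenvalues i) : ℝ) : 𝕜) := by
  rw [← cfc_polynomial q A hA.isSelfAdjoint, hA.trace_cfc]

lemma eval_eigenvalues_eq_zero_of_aeval_eq_zero (hA : A.IsHermitian) {q : ℝ[X]}
    (hq : aeval A q = 0) (i : n) : q.eval (hA.eigenvalues i) = 0 := by
  rw [← cfc_polynomial q A hA.isSelfAdjoint, ← cfc_zero ℝ A] at hq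
  exact (eqOn_of_cfc_eq_cfc hq : Set.EqOn _ _ _) (hA.eigenvalues_mem_spectrum_real i)

variable {ι : Type*} [Fintype ι] [DecidableEq ι] {μ : ι → ℝ} {E : ι → Matrix n n 𝕜}

lemma exists_eigenvalues_eq_of_sum_smul (hA : A.IsHermitian)
    (hE : CompleteOrthogonalIdempotents E) (hAE : A = ∑ i, μ i • E i) (k : n) :
    ∃ i, hA.eigenvalues k = μ i := by
  have hq : aeval A (∏ i, (X - C (μ i))) = 0 := by
    rw [hAE, hE.aeval_sum_smul]
    exact Finset.sum_eq_zero fun i _ => by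
      simp [eval_prod, Finset.prod_eq_zero (Finset.mem_univ i)]
  simpa [eval_prod, Finset.prod_eq_zero_iff, sub_eq_zero] using
    hA.eval_eigenvalues_eq_zero_of_aeval_eq_zero hq k

lemma card_eigenvalues_eq_sum_trace (hA : A.IsHermitian) (hE : CompleteOrthogonalIdempotents E)
    (hAE : A = ∑ i, μ i • E i) (x : ℝ) :
    (#{k | hA.eigenvalues k = x} : 𝕜) = ∑ i with μ i = x, (E i).trace := by
  set s := insert x (univ.image μ)
  have hs : Set.InjOn id (s : Set ℝ) := Set.injOn_id _
  have hL : ∀ y ∈ s, (Lagrange.basis s id x).eval y = if y = x then 1 else 0 := by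
    intro y hy
    split_ifs with h
    · subst h; exact Lagrange.eval_basis_self hs (mem_insert_self _ _)
    · exact Lagrange.eval_basis_of_ne (v := id) (Ne.symm h) hy
  have hμ : ∀ i, μ i ∈ s := fun i => mem_insert_of_mem (mem_image_of_mem μ (mem_univ i))
  have hev : ∀ k, hA.eigenvalues k ∈ s := fun k => by
    obtain ⟨i, hi⟩ := hA.exists_eigenvalues_eq_of_sum_smul hE hAE k
    exact hi ▸ hμ i
  have hLA : aeval A (Lagrange.basis s id x) = ∑ i with μ i = x, E i := by
    rw [hAE, hE.aeval_sum_smul, Finset.sum_filter]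
    simp only [hL _ (hμ _), ite_smul, one_smul, zero_smul]
  have := hA.trace_aeval (Lagrange.basis s id x)
  simp only [hLA, hL _ (hev _), trace_sum] at this
  rw [this]
  simp [Finset.sum_boole]

theorem map_eigenvalues_eq_sum_replicate (hA : A.IsHermitian)
    (hE : CompleteOrthogonalIdempotents E) (hAE : A = ∑ i, μ i • E i) {N : ι → ℕ}
    (hN : ∀ i, (N i : 𝕜) = (E i).trace) :
    univ.val.map hA.eigenvalues = ∑ i, Multiset.replicate (N i) (μ i) := by
  ext x
  have := hA.card_eigenvalues_eq_sum_trace hE hAE x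
  simp_rw [← hN, ← Nat.cast_sum, Nat.cast_inj] at this
  rw [Multiset.count_map, Multiset.count_sum']
  simp only [Multiset.count_replicate, eq_comm (a := x)]
  rw [← Finset.sum_filter, ← this]
  rfl

end Matrix.IsHermitian

theorem CompleteOrthogonalIdempotents.of_mul_eq_natCast_mul {B ι : Type*} [Ring B] [Algebra ℚ B]
    [Fintype ι] [DecidableEq ι] {F : ι → B} {n : ℕ} (hn : n ≠ 0)
    (hmul : ∀ i j, F i * F j = if i = j then n * F i else 0) (hsum : ∑ i, F i = n) :
    CompleteOrthogonalIdempotents fun i => (n⁻¹ : ℚ) • F i := by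
  have hcast : ∀ x : B, (n : B) * x = (n : ℚ) • x := fun x => by
    rw [Nat.cast_smul_eq_nsmul, nsmul_eq_mul]
  have hn' : (n : ℚ) ≠ 0 := Nat.cast_ne_zero.mpr hn
  refine ⟨OrthogonalIdempotents.iff_mul_eq.mpr fun i j => ?_, ?_⟩
  · rw [smul_mul_smul, hmul]
    split_ifs
    · rw [hcast, smul_smul]
      congr 1
      field_simp
    · rw [smul_zero]
  · rw [← Finset.smul_sum, hsum, ← mul_one (n : B), hcast, smul_smul, inv_mul_cancel₀ hn',
      one_smul]

/-- Six times the primitive idempotents of the commutative ring generated by `P` and `X` subject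
to `P² = 1` and `X² = 2 + PX`: its characters send `(P, X)` to `(1, -1)`, `(1, 2)`, `(-1, -2)`,
`(-1, 1)`, and the `i`-th element is `6` at the `i`-th character and `0` at the others. -/
def essentialIdempotents {B : Type*} [Ring B] (P X : B) : Fin 4 → B :=
  ![(1 + P) * (2 - X), (1 + P) * (1 + X), (1 - P) * (1 - X), (1 - P) * (2 + X)]

theorem essentialIdempotents_mul_of_comm {A : Type*} [CommRing A] {P X : A}
    (hP : P * P = 1) (hX : X * X = 2 + P * X) (i j : Fin 4) :
    essentialIdempotents P X i * essentialIdempotents P X j =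
      if i = j then 6 * essentialIdempotents P X i else 0 := by
  fin_cases i <;> fin_cases j <;>
    simp only [essentialIdempotents, Fin.zero_eta, Fin.mk_one, Fin.reduceFinMk, Matrix.cons_val,
      Fin.reduceEq, zero_ne_one, one_ne_zero, ↓reduceIte] <;>
    grind

theorem essentialIdempotents_eq {B : Type*} [Ring B] (P X : B) :
    essentialIdempotents P X = ![2 • (1 + P) - X - P * X, 1 + P + X + P * X,
      1 - P - X + P * X, 2 • (1 - P) + X - P * X] := by
  ext i
  fin_cases i <;> simp only [essentialIdempotents, Fin.zero_eta, Fin.mk_one, Fin.reduceFinMk,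
    Matrix.cons_val, mul_add, mul_sub, add_mul, sub_mul, one_mul, mul_one, mul_two, two_nsmul] <;>
    abel

theorem map_essentialIdempotents {A B F : Type*} [Ring A] [Ring B] [FunLike F A B]
    [RingHomClass F A B] (f : F) (P X : A) (i : Fin 4) :
    f (essentialIdempotents P X i) = essentialIdempotents (f P) (f X) i := by
  fin_cases i <;> simp [essentialIdempotents, map_ofNat]

theorem sum_essentialIdempotents {B : Type*} [Ring B] (P X : B) :
    ∑ i, essentialIdempotents P X i = 6 := by
  simp only [Fin.sum_univ_four, essentialIdempotents, Matrix.cons_val, add_assoc, ← mul_add,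
    sub_add_add_cancel]
  norm_num [← add_mul]

open scoped IsMulCommutative in
theorem essentialIdempotents_mul {B : Type*} [Ring B] {P X : B} (hPX : Commute P X)
    (hP : P * P = 1) (hX : X * X = 2 + P * X) (i j : Fin 4) :
    essentialIdempotents P X i * essentialIdempotents P X j =
      if i = j then 6 * essentialIdempotents P X i else 0 := by
  let S := Subring.closure {P, X}
  have : IsMulCommutative S := Subring.isMulCommutative_closure (by
    simp only [Set.mem_insert_iff, Set.mem_singleton_iff]
    rintro a (rfl | rfl) b (rfl | rfl) <;> first | rfl | exact hPX.eq | exact hPX.symm.eq)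
  let p : S := ⟨P, Subring.subset_closure (by simp)⟩
  let x : S := ⟨X, Subring.subset_closure (by simp)⟩
  have key := essentialIdempotents_mul_of_comm (P := p) (X := x) (Subtype.ext hP)
    (Subtype.ext hX) i j
  have := congrArg S.subtype key
  rwa [map_mul, apply_ite S.subtype, map_mul, map_zero, map_ofNat, map_essentialIdempotents,
    map_essentialIdempotents] at this

open Equiv

section permOp3
variable (d : ℕ)

lemma permOp3_mul (σ τ : Perm (Fin 3)) : permOp3 d σ * permOp3 d τ = permOp3 d (τ * σ) := by
  ext i j
  simp only [permOp3, mul_apply, of_apply, boole_mul, ← ite_and, and_comm (a := i = _)]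
  simp only [ite_and, sum_ite_eq', mem_univ, ↓reduceIte, Perm.coe_mul]
  rfl

lemma permOp3_one : permOp3 d 1 = 1 := by
  ext i j
  simp [permOp3, one_apply]

lemma conjTranspose_permOp3 (σ : Perm (Fin 3)) : (permOp3 d σ)ᴴ = permOp3 d σ⁻¹ := by
  ext i j
  simp [permOp3, Equiv.eq_comp_symm, eq_comm]

lemma sum_fun_fin_three {M α : Type*} [AddCommMonoid M] [Fintype α] (g : (Fin 3 → α) → M) :
    ∑ f, g f = ∑ a, ∑ b, ∑ c, g ![a, b, c] := by
  rw [← (Fin.consEquiv fun _ => α).sum_comp, Fintype.sum_prod_type]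
  refine Finset.sum_congr rfl fun a _ => ?_
  rw [← (finTwoArrowEquiv α).symm.sum_comp, Fintype.sum_prod_type]
  rfl

lemma trace_permOp3 (σ : Perm (Fin 3)) :
    (permOp3 d σ).trace = ∑ a : Fin d, ∑ b : Fin d, ∑ c : Fin d,
      if ![a, b, c] = ![a, b, c] ∘ σ then (1 : ℂ) else 0 :=
  sum_fun_fin_three _

lemma trace_permOp3_swap_zero_one : (permOp3 d (swap 0 1)).trace = d ^ 2 := by
  simp [trace_permOp3, funext_iff, Fin.forall_fin_succ, eq_comm (a := (_ : Fin d)), sq]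

lemma trace_permOp3_swap_zero_two : (permOp3 d (swap 0 2)).trace = d ^ 2 := by
  simp [trace_permOp3, funext_iff, Fin.forall_fin_succ, eq_comm (a := (_ : Fin d)), sq,
    swap_apply_def]

lemma trace_permOp3_swap_one_two : (permOp3 d (swap 1 2)).trace = d ^ 2 := by
  simp [trace_permOp3, funext_iff, Fin.forall_fin_succ, eq_comm (a := (_ : Fin d)), sq,
    swap_apply_def]

lemma trace_permOp3_finRotate : (permOp3 d (finRotate 3)).trace = d := by
  simp [trace_permOp3, funext_iff, Fin.forall_fin_succ, eq_comm (a := (_ : Fin d)), ite_and,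
    Finset.sum_ite_eq]

lemma trace_permOp3_finRotate_inv : (permOp3 d (finRotate 3)⁻¹).trace = d := by
  simp [trace_permOp3, funext_iff, Fin.forall_fin_succ, eq_comm (a := (_ : Fin d)), ite_and,
    Finset.sum_ite_eq]

def transpositionSum : Matrix (Fin 3 → Fin d) (Fin 3 → Fin d) ℂ :=
  permOp3 d (swap 0 2) + permOp3 d (swap 1 2)

def threeCycleSum : Matrix (Fin 3 → Fin d) (Fin 3 → Fin d) ℂ :=
  permOp3 d (finRotate 3) + permOp3 d (finRotate 3)⁻¹

lemma permOp3_swap_zero_one_mul_self : permOp3 d (swap 0 1) * permOp3 d (swap 0 1) = 1 := by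
  rw [permOp3_mul, Equiv.swap_mul_self, permOp3_one]

lemma permOp3_swap_zero_one_mul_transpositionSum :
    permOp3 d (swap 0 1) * transpositionSum d = threeCycleSum d := by
  have h02 : swap 0 2 * swap 0 1 = finRotate 3 := by decide
  have h12 : swap 1 2 * swap 0 1 = (finRotate 3)⁻¹ := by decide
  rw [transpositionSum, mul_add, permOp3_mul, permOp3_mul, h02, h12, threeCycleSum]

lemma transpositionSum_mul_permOp3_swap_zero_one :
    transpositionSum d * permOp3 d (swap 0 1) = threeCycleSum d := by
  have h02 : swap 0 1 * swap 0 2 = (finRotate 3)⁻¹ := by decide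
  have h12 : swap 0 1 * swap 1 2 = finRotate 3 := by decide
  rw [transpositionSum, add_mul, permOp3_mul, permOp3_mul, h02, h12, threeCycleSum, add_comm]

lemma transpositionSum_mul_self :
    transpositionSum d * transpositionSum d = 2 + threeCycleSum d := by
  have h02 : swap 1 2 * swap 0 2 = finRotate 3 := by decide
  have h12 : swap 0 2 * swap 1 2 = (finRotate 3)⁻¹ := by decide
  simp only [transpositionSum, mul_add, add_mul, permOp3_mul, Equiv.swap_mul_self, permOp3_one,
    h02, h12, threeCycleSum, ← one_add_one_eq_two]
  abel

lemma commute_permOp3_swap_zero_one_transpositionSum :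
    Commute (permOp3 d (swap 0 1)) (transpositionSum d) :=
  (permOp3_swap_zero_one_mul_transpositionSum d).trans
    (transpositionSum_mul_permOp3_swap_zero_one d).symm

lemma trace_transpositionSum : (transpositionSum d).trace = 2 * d ^ 2 := by
  rw [transpositionSum, trace_add, trace_permOp3_swap_zero_two, trace_permOp3_swap_one_two]
  ring

lemma trace_threeCycleSum : (threeCycleSum d).trace = 2 * d := by
  rw [threeCycleSum, trace_add, trace_permOp3_finRotate, trace_permOp3_finRotate_inv]
  ring

end permOp3

theorem Nat.cast_choose_three {K : Type*} [Field K] [CharZero K] (n : ℕ) :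
    (n.choose 3 : K) = n * (n - 1) * (n - 2) / 6 := by
  induction n with
  | zero => simp
  | succ n ih =>
    rw [Nat.choose_succ_succ, Nat.cast_add, ih, Nat.cast_choose_two]
    push_cast
    ring

noncomputable def rOp (d : ℕ) : Matrix (Fin 3 → Fin d) (Fin 3 → Fin d) ℂ :=
  ((d : ℂ) + 1) ^ 2 •
      (permOp3 d (Equiv.swap 0 1) + permOp3 d (finRotate 3) + permOp3 d (finRotate 3)⁻¹)
    - ((d : ℂ) + 1) •
      (permOp3 d 1 + permOp3 d (Equiv.swap 0 2) + permOp3 d (Equiv.swap 1 2))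

def rOpEigenvalues (d : ℕ) : Fin 4 → ℝ :=
  ![0, 3 * d * (d + 1), (d + 1) * (d + 2), -(2 * (d + 1) * (d + 2))]

def rOpMultiplicities (d : ℕ) : Fin 4 → ℕ :=
  ![2 * (d + 1).choose 3, (d + 2).choose 3, d.choose 3, 2 * (d + 1).choose 3]

noncomputable def rOpIdempotents (d : ℕ) :
    Fin 4 → Matrix (Fin 3 → Fin d) (Fin 3 → Fin d) ℂ :=
  fun i => (6⁻¹ : ℚ) • essentialIdempotents (permOp3 d (swap 0 1)) (transpositionSum d) i

section rOp
variable (d : ℕ)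

lemma isHermitian_rOp : (rOp d).IsHermitian := by
  simp only [IsHermitian, rOp, conjTranspose_sub, conjTranspose_smul, conjTranspose_add,
    conjTranspose_permOp3, swap_inv, inv_one, inv_inv, star_pow, star_add, star_one,
    star_natCast]
  rw [add_right_comm (permOp3 d (swap 0 1))]

lemma completeOrthogonalIdempotents_rOpIdempotents :
    CompleteOrthogonalIdempotents (rOpIdempotents d) := by
  have hX : transpositionSum d * transpositionSum d =
      2 + permOp3 d (swap 0 1) * transpositionSum d := by
    rw [transpositionSum_mul_self, permOp3_swap_zero_one_mul_transpositionSum]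
  have hmul := essentialIdempotents_mul (commute_permOp3_swap_zero_one_transpositionSum d)
    (permOp3_swap_zero_one_mul_self d) hX
  refine CompleteOrthogonalIdempotents.of_mul_eq_natCast_mul (n := 6) (by norm_num)
    (fun i j => ?_) ?_
  · exact_mod_cast hmul i j
  · exact_mod_cast sum_essentialIdempotents (permOp3 d (swap 0 1)) (transpositionSum d)

lemma rOp_eq_sum : rOp d = ∑ i, rOpEigenvalues d i • rOpIdempotents d i := by
  rw [rOp, add_assoc, add_assoc, ← threeCycleSum, ← transpositionSum, permOp3_one,
    ← permOp3_swap_zero_one_mul_transpositionSum, Fin.sum_univ_four]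
  simp only [rOpEigenvalues, rOpIdempotents, essentialIdempotents_eq, Matrix.cons_val]
  module

lemma natCast_rOpMultiplicities_eq_trace (i : Fin 4) :
    (rOpMultiplicities d i : ℂ) = (rOpIdempotents d i).trace := by
  fin_cases i <;>
  simp only [rOpMultiplicities, rOpIdempotents, essentialIdempotents_eq, Fin.zero_eta, Fin.mk_one,
    Fin.reduceFinMk, Matrix.cons_val, trace_smul, trace_add, trace_sub, trace_one,
    trace_transpositionSum, permOp3_swap_zero_one_mul_transpositionSum, trace_threeCycleSum,
    trace_permOp3_swap_zero_one, Fintype.card_fun, Fintype.card_fin] <;>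
  push_cast [Nat.cast_choose_three, Rat.smul_def] <;>
  ring

end rOp

/-- the operator
`R = (d+1)²[π_{(12)} + π_{(123)} + π_{(132)}] − (d+1)[π_e + π_{(13)} + π_{(23)}]`
on `H^{⊗3}` is Hermitian, and its singular values (absolute eigenvalues) are
`0`, `3d(d+1)`, `(d+1)(d+2)` and `2(d+1)(d+2)`, with respective multiplicities
`2·C(d+1,3)`, `C(d+2,3)`, `C(d,3)` and `2·C(d+1,3)`. -/
theorem singular_values_of_R (d : ℕ)
    (R : Matrix (Fin 3 → Fin d) (Fin 3 → Fin d) ℂ)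
    (hRdef : R = ((d : ℂ) + 1) ^ 2 •
        (permOp3 d (Equiv.swap 0 1) + permOp3 d (finRotate 3) + permOp3 d (finRotate 3)⁻¹)
      - ((d : ℂ) + 1) •
        (permOp3 d 1 + permOp3 d (Equiv.swap 0 2) + permOp3 d (Equiv.swap 1 2))) :
    ∃ hR : R.IsHermitian,
      (Finset.univ.val.map fun i => |hR.eigenvalues i|)
        = Multiset.replicate (2 * Nat.choose (d + 1) 3) (0 : ℝ)
          + Multiset.replicate (Nat.choose (d + 2) 3) ((3 * d * (d + 1) : ℝ))
          + Multiset.replicate (Nat.choose d 3) (((d + 1) * (d + 2) : ℝ))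
          + Multiset.replicate (2 * Nat.choose (d + 1) 3) ((2 * (d + 1) * (d + 2) : ℝ)) := by
  obtain rfl : R = rOp d := hRdef
  refine ⟨isHermitian_rOp d, ?_⟩
  change Multiset.map (abs ∘ (isHermitian_rOp d).eigenvalues) _ = _
  rw [← Multiset.map_map abs, (isHermitian_rOp d).map_eigenvalues_eq_sum_replicate
    (completeOrthogonalIdempotents_rOpIdempotents d) (rOp_eq_sum d)
    (natCast_rOpMultiplicities_eq_trace d)]
  simp only [Fin.sum_univ_four, Multiset.map_add, Multiset.map_replicate, rOpEigenvalues,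
    rOpMultiplicities, Matrix.cons_val]
  rw [abs_zero, abs_neg, abs_of_nonneg (by positivity), abs_of_nonneg (by positivity),
    abs_of_nonneg (by positivity)]
end
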